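/- Let d ≥ 2 be an integer, p ∈ [1,∞], and u ∈ [-1/2,1/2)^d with 0 < |u|_{p'} ≤ 1/(4 d^{1/p}). Then for any real α with |u|_{p'} ≤ α ≤ 1/(4 d^{1/p}) there exists q ∈ ℤ^d such that |q|_p ≤ 1/(2α), (1/(4α))·|u|_{p'} ≤ |q·u| ≤ 1/2, and |1 − e^{2πi q·u}| ≥ (√2/α)·|u|_{p'}. -/

import Mathlib

open MeasureTheory Finset
open scoped ENNReal Classical BigOperators

noncomputable section

namespace NF

variable {d : ℕ} {ι : Type*} [Fintype ι]

/-- ℓ^p norm on ℝ^d for p ∈ [1,∞] (encoded in ℝ≥0∞). -/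
def lpnorm (p : ℝ≥0∞) (x : Fin d → ℝ) : ℝ :=
  if p = ∞ then ⨆ i, |x i| else (∑ i, |x i| ^ p.toReal) ^ (1 / p.toReal)

/-- the closed ℓ^p ball Ω_m^p. -/
def lpBall (d : ℕ) (p : ℝ≥0∞) (m : ℝ) : Set (Fin d → ℝ) := {x | lpnorm p x ≤ m}

def dotR (ω x : Fin d → ℝ) : ℝ := ∑ i, ω i * x i

def l2norm (u : ι → ℂ) : ℝ := Real.sqrt (∑ k, ‖u k‖ ^ 2)

/-- the nonharmonic Fourier transform of u, as a function of ω. -/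
def Fop (x : ι → Fin d → ℝ) (u : ι → ℂ) (ω : Fin d → ℝ) : ℂ :=
  ∑ k, u k * Complex.exp (-(2 * Real.pi * Complex.I) * (dotR ω (x k) : ℝ))

/-- its L²(Ω) norm -/
def FopNorm (Ω : Set (Fin d → ℝ)) (x : ι → Fin d → ℝ) (u : ι → ℂ) : ℝ :=
  Real.sqrt (∫ ω in Ω, ‖Fop x u ω‖ ^ 2)

def sigmaMinF (Ω : Set (Fin d → ℝ)) (x : ι → Fin d → ℝ) : ℝ :=
  ⨅ u : {u : ι → ℂ // l2norm u = 1}, FopNorm Ω x u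

def sigmaMaxF (Ω : Set (Fin d → ℝ)) (x : ι → Fin d → ℝ) : ℝ :=
  ⨆ u : {u : ι → ℂ // l2norm u = 1}, FopNorm Ω x u

def intPt (ω : Fin d → ℤ) : Fin d → ℝ := fun i => (ω i : ℝ)

/-- squared ℓ² norm of Φ_{Ω,X} u, summing over integer points of Ω. -/
def PhiSq (Ω : Set (Fin d → ℝ)) (x : ι → Fin d → ℝ) (u : ι → ℂ) : ℝ :=
  ∑' ω : Fin d → ℤ, if intPt ω ∈ Ω then ‖Fop x u (intPt ω)‖ ^ 2 else 0

def PhiNorm (Ω : Set (Fin d → ℝ)) (x : ι → Fin d → ℝ) (u : ι → ℂ) : ℝ :=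
  Real.sqrt (PhiSq Ω x u)

def sigmaMinPhi (Ω : Set (Fin d → ℝ)) (x : ι → Fin d → ℝ) : ℝ :=
  ⨅ u : {u : ι → ℂ // l2norm u = 1}, PhiNorm Ω x u

def sigmaMaxPhi (Ω : Set (Fin d → ℝ)) (x : ι → Fin d → ℝ) : ℝ :=
  ⨆ u : {u : ι → ℂ // l2norm u = 1}, PhiNorm Ω x u

/-- torus ℓ^p distance. -/
def torusDist (p : ℝ≥0∞) (x y : Fin d → ℝ) : ℝ :=
  ⨅ n : Fin d → ℤ, lpnorm p (fun i => x i - y i + (n i : ℝ))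

/-- fundamental domain [-1/2,1/2)^d of the torus. -/
def cube (d : ℕ) : Set (Fin d → ℝ) := Set.univ.pi fun _ => Set.Ico (-(1:ℝ)/2) (1/2)

def torusL2 (f : (Fin d → ℝ) → ℂ) : ℝ := Real.sqrt (∫ x in cube d, ‖f x‖ ^ 2)

def fullL2 (f : (Fin d → ℝ) → ℂ) : ℝ := Real.sqrt (∫ x, ‖f x‖ ^ 2)

/-- membership in the Paley–Wiener space W(Ω). -/
def IsBandlimited (Ω : Set (Fin d → ℝ)) (f : (Fin d → ℝ) → ℂ) : Prop :=
  ∃ F : (Fin d → ℝ) → ℂ, MemLp F 2 (volume.restrict Ω) ∧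
    ∀ x, f x = ∫ ω in Ω, F ω * Complex.exp ((2 * Real.pi * Complex.I) * (dotR ω x : ℝ))

/-- membership in P(Ω): trigonometric polynomials with frequencies in Ω ∩ ℤ^d. -/
def IsTrigPoly (Ω : Set (Fin d → ℝ)) (f : (Fin d → ℝ) → ℂ) : Prop :=
  ∃ c : (Fin d → ℤ) → ℂ, (Function.support c).Finite ∧
    (∀ ω, c ω ≠ 0 → intPt ω ∈ Ω) ∧
    ∀ x, f x = ∑' ω : Fin d → ℤ, c ω * Complex.exp ((2 * Real.pi * Complex.I) * (dotR (intPt ω) x : ℝ))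

/-- |Ω|_* = #(Ω ∩ ℤ^d). -/
def intCard (Ω : Set (Fin d → ℝ)) : ℕ := Set.ncard {ω : Fin d → ℤ | intPt ω ∈ Ω}

/-- τ local sparsity ν_p(τ,X) for an indexed family. -/
def localSparsity (p : ℝ≥0∞) (τ : ℝ) (x : ι → Fin d → ℝ) : ℕ :=
  Finset.univ.sup fun k => (Finset.univ.filter fun j => torusDist p (x j) (x k) ≤ τ).card

/-- τ local sparsity ν_p(τ,X) for a finite set. -/
def finsetSparsity (p : ℝ≥0∞) (τ : ℝ) (X : Finset (Fin d → ℝ)) : ℕ :=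
  X.sup fun x => (X.filter fun y => torusDist p y x ≤ τ).card

/-- minimum torus ℓ^p separation of a finite set. -/
def finsetSep (p : ℝ≥0∞) (X : Finset (Fin d → ℝ)) : ℝ :=
  sInf {r | ∃ x ∈ X, ∃ y ∈ X, x ≠ y ∧ torusDist p x y = r}

/-- Fourier transform of a real-valued function on ℝ^d. -/
def FT (f : (Fin d → ℝ) → ℝ) (ξ : Fin d → ℝ) : ℂ :=
  ∫ x, (f x : ℂ) * Complex.exp (-(2 * Real.pi * Complex.I) * (dotR ξ x : ℝ))

/-- X consists of clumps with parameters (p,τ,λ) in the torus ℓ^p metric. -/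
def ConsistsOfClumps (p : ℝ≥0∞) (τ : ℝ) (lam : ℕ) (X : Finset (Fin d → ℝ)) : Prop :=
  ∃ r : ℕ, 0 < r ∧ ∃ C : Fin r → Finset (Fin d → ℝ),
    (∀ k, (C k).card = lam) ∧
    (∀ k l, k ≠ l → Disjoint (C k) (C l)) ∧
    Finset.univ.biUnion C = X ∧
    (∀ k, ∀ x ∈ C k, ∀ y ∈ C k, torusDist p x y ≤ τ) ∧
    (1 < r → ∀ k l, k ≠ l → ∀ x ∈ C k, ∀ y ∈ C l, τ < torusDist p x y)

/-!
Take `w` with `‖w‖_p ≤ 1` and `w ⬝ u = ‖u‖_q` (the equality case of Hölder), scale it by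
`c = 1/(2α) - d^{1/p}`, and round each coordinate up or down according to the sign of `u i`.
The rounding error `e` satisfies `‖e‖_∞ ≤ 1`, hence `‖e‖_p ≤ d^{1/p}`, and `e ⬝ u ≥ 0`; so
`q ⬝ u` lies between `c ‖u‖_q ≥ ‖u‖_q/(4α)` and `(c + d^{1/p}) ‖u‖_q = ‖u‖_q/(2α) ≤ 1/2`.
Finally `|1 - e^{2πi t}| = 2 sin(π t)` for `t ∈ [0, 1/2]`, and concavity of `sin` on `[0, π/4]`
gives `sin(π s) ≥ 2√2 s` for `s ≤ 1/4`.
-/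

open ENNReal Real

lemma lpnorm_top (x : Fin d → ℝ) : lpnorm ∞ x = ⨆ i, |x i| := if_pos rfl

lemma lpnorm_of_ne_top {p : ℝ≥0∞} (hp : p ≠ ∞) (x : Fin d → ℝ) :
    lpnorm p x = (∑ i, |x i| ^ p.toReal) ^ (1 / p.toReal) := if_neg hp

lemma lpnorm_nonneg (p : ℝ≥0∞) (x : Fin d → ℝ) : 0 ≤ lpnorm p x := by
  unfold lpnorm
  split_ifs
  exacts [Real.iSup_nonneg fun i => abs_nonneg _, by positivity]

lemma lpnorm_eq_norm_toLp {p : ℝ≥0∞} (hp : p ≠ 0) (x : Fin d → ℝ) :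
    lpnorm p x = ‖WithLp.toLp p x‖ := by
  rcases eq_or_ne p ∞ with rfl | hpt
  · simp [lpnorm_top, PiLp.norm_eq_ciSup]
  · simp [lpnorm_of_ne_top hpt, PiLp.norm_eq_sum (ENNReal.toReal_pos hp hpt)]

lemma lpnorm_add_le {p : ℝ≥0∞} [Fact (1 ≤ p)] (x y : Fin d → ℝ) :
    lpnorm p (x + y) ≤ lpnorm p x + lpnorm p y := by
  have hp : p ≠ 0 := (zero_lt_one.trans_le Fact.out).ne'
  simpa only [lpnorm_eq_norm_toLp hp, WithLp.toLp_add] using norm_add_le _ _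

lemma lpnorm_smul {p : ℝ≥0∞} [Fact (1 ≤ p)] (c : ℝ) (x : Fin d → ℝ) :
    lpnorm p (c • x) = |c| * lpnorm p x := by
  have hp : p ≠ 0 := (zero_lt_one.trans_le Fact.out).ne'
  simp only [lpnorm_eq_norm_toLp hp, WithLp.toLp_smul, norm_smul, Real.norm_eq_abs]

lemma lpnorm_le_card_rpow_of_abs_le_one {p : ℝ≥0∞} [Fact (1 ≤ p)] {e : Fin d → ℝ}
    (he : ∀ i, |e i| ≤ 1) :
    lpnorm p e ≤ (d : ℝ) ^ (1 / p).toReal := by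
  have hp : p ≠ 0 := (zero_lt_one.trans_le Fact.out).ne'
  have h := (PiLp.lipschitzWith_toLp p fun _ : Fin d => ℝ).dist_le_mul e 0
  have he' : ‖e‖ ≤ 1 := pi_norm_le_iff_of_nonneg zero_le_one |>.2 he
  simp only [dist_zero_right, WithLp.toLp_zero, Fintype.card_fin] at h
  rw [lpnorm_eq_norm_toLp hp]
  push_cast at h
  exact h.trans (mul_le_of_le_one_right (by positivity) he')

lemma dotR_comm (x y : Fin d → ℝ) : dotR x y = dotR y x := by
  simp only [dotR, mul_comm]

lemma dotR_smul_add_left (c : ℝ) (w e u : Fin d → ℝ) :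
    dotR (c • w + e) u = c * dotR w u + dotR e u := by
  simp only [dotR, Pi.add_apply, Pi.smul_apply, smul_eq_mul, add_mul, Finset.sum_add_distrib,
    Finset.mul_sum, mul_assoc]

lemma dotR_le_lpnorm_top_mul_lpnorm_one (x y : Fin d → ℝ) :
    dotR x y ≤ lpnorm ∞ x * lpnorm 1 y := by
  rw [lpnorm_top, lpnorm_of_ne_top one_ne_top, dotR]
  simp only [toReal_one, Real.rpow_one, div_one, Finset.mul_sum]
  refine Finset.sum_le_sum fun i _ => ?_
  calc x i * y i ≤ |x i| * |y i| := (le_abs_self _).trans (abs_mul _ _).le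
    _ ≤ (⨆ j, |x j|) * |y i| :=
      mul_le_mul_of_nonneg_right (le_ciSup (Set.finite_range fun j => |x j|).bddAbove i)
        (abs_nonneg _)

theorem dotR_le_lpnorm_mul_lpnorm {p q : ℝ≥0∞} [p.HolderConjugate q] (x y : Fin d → ℝ) :
    dotR x y ≤ lpnorm p x * lpnorm q y := by
  rcases eq_or_ne p ∞ with rfl | hp
  · obtain rfl : q = 1 := (HolderConjugate.eq_top_iff_eq_one ∞ q).1 rfl
    exact dotR_le_lpnorm_top_mul_lpnorm_one x y
  rcases eq_or_ne q ∞ with rfl | hq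
  · obtain rfl : p = 1 := (HolderConjugate.eq_top_iff_eq_one ∞ p).1 rfl
    rw [dotR_comm, mul_comm]
    exact dotR_le_lpnorm_top_mul_lpnorm_one y x
  · rw [lpnorm_of_ne_top hp, lpnorm_of_ne_top hq]
    exact Real.inner_le_Lp_mul_Lq _ _ _ (HolderConjugate.toReal_of_ne_top hp hq)

lemma abs_sign_le_one (x : ℝ) : |(SignType.sign x : ℝ)| ≤ 1 := by
  rcases lt_trichotomy x 0 with h | h | h <;> simp [_root_.sign_neg, sign_pos, h]

lemma exists_lpnorm_top_le_one_dotR_eq (u : Fin d → ℝ) :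
    ∃ w, lpnorm ∞ w ≤ 1 ∧ dotR w u = lpnorm 1 u := by
  refine ⟨fun i => SignType.sign (u i),
    Real.iSup_le (fun i => abs_sign_le_one _) zero_le_one, ?_⟩
  simp [dotR, lpnorm_of_ne_top one_ne_top, sign_mul_self]

lemma exists_lpnorm_one_le_one_dotR_eq (u : Fin d → ℝ) :
    ∃ w, lpnorm 1 w ≤ 1 ∧ dotR w u = lpnorm ∞ u := by
  cases isEmpty_or_nonempty (Fin d)
  · exact ⟨0, by simp [lpnorm], by simp [dotR, lpnorm_top]⟩
  obtain ⟨i₀, hi₀⟩ := exists_eq_ciSup_of_finite (f := fun i => |u i|)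
  refine ⟨Pi.single i₀ (SignType.sign (u i₀)), ?_, ?_⟩
  · rw [lpnorm_of_ne_top one_ne_top, Finset.sum_eq_single i₀ (fun j _ hj => by simp [hj])
      (by simp)]
    simpa using abs_sign_le_one (u i₀)
  · simp [dotR, lpnorm_top, ← hi₀, Pi.single_apply, sign_mul_self]

lemma exists_lpnorm_le_one_dotR_eq_of_ne_top {p q : ℝ≥0∞} [p.HolderConjugate q]
    (hp : p ≠ ∞) (hq : q ≠ ∞) (u : Fin d → ℝ) :
    ∃ w, lpnorm p w ≤ 1 ∧ dotR w u = lpnorm q u := by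
  obtain ⟨⟨g, hg, hgu⟩, -⟩ := NNReal.isGreatest_Lp Finset.univ (fun i => ‖u i‖₊)
    (HolderConjugate.toReal_of_ne_top hq hp)
  have hg' : ∑ i, (g i : ℝ) ^ p.toReal ≤ 1 := by exact_mod_cast hg
  have hgu' : ∑ i, |u i| * g i = (∑ i, |u i| ^ q.toReal) ^ (1 / q.toReal) := by
    simpa using congrArg ((↑) : NNReal → ℝ) hgu
  refine ⟨fun i => SignType.sign (u i) * g i, ?_, ?_⟩
  · rw [lpnorm_of_ne_top hp]
    refine Real.rpow_le_one (by positivity) (le_trans (Finset.sum_le_sum fun i _ => ?_) hg')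
      (by positivity)
    rw [abs_mul, NNReal.abs_eq]
    gcongr
    exact mul_le_of_le_one_left (g i).2 (abs_sign_le_one _)
  · rw [lpnorm_of_ne_top hq, ← hgu', dotR]
    refine Finset.sum_congr rfl fun i _ => ?_
    rw [← sign_mul_self]; ring

theorem exists_lpnorm_le_one_dotR_eq {p q : ℝ≥0∞} [p.HolderConjugate q] (u : Fin d → ℝ) :
    ∃ w, lpnorm p w ≤ 1 ∧ dotR w u = lpnorm q u := by
  rcases eq_or_ne p ∞ with rfl | hp
  · obtain rfl : q = 1 := (HolderConjugate.eq_top_iff_eq_one ∞ q).1 rfl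
    exact exists_lpnorm_top_le_one_dotR_eq u
  rcases eq_or_ne q ∞ with rfl | hq
  · obtain rfl : p = 1 := (HolderConjugate.eq_top_iff_eq_one ∞ p).1 rfl
    exact exists_lpnorm_one_le_one_dotR_eq u
  · exact exists_lpnorm_le_one_dotR_eq_of_ne_top hp hq u

lemma exists_int_abs_sub_le_one_and_mul_nonneg (x y : ℝ) :
    ∃ n : ℤ, |(n : ℝ) - x| ≤ 1 ∧ 0 ≤ ((n : ℝ) - x) * y := by
  rcases le_or_gt 0 y with hy | hy
  · have h := sub_nonneg.2 (Int.le_ceil x)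
    refine ⟨⌈x⌉, ?_, mul_nonneg h hy⟩
    rw [abs_of_nonneg h]
    linarith [Int.ceil_lt_add_one x]
  · have h := sub_nonpos.2 (Int.floor_le x)
    refine ⟨⌊x⌋, ?_, mul_nonneg_of_nonpos_of_nonpos h hy.le⟩
    rw [abs_of_nonpos h]
    linarith [Int.lt_floor_add_one x]

theorem exists_intPt_lpnorm_le_and_dotR_mem {p q : ℝ≥0∞} [p.HolderConjugate q]
    (u : Fin d → ℝ) {c : ℝ} (hc : 0 ≤ c) :
    ∃ v : Fin d → ℤ, lpnorm p (intPt v) ≤ c + (d : ℝ) ^ (1 / p).toReal ∧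
      c * lpnorm q u ≤ dotR (intPt v) u ∧
      dotR (intPt v) u ≤ (c + (d : ℝ) ^ (1 / p).toReal) * lpnorm q u := by
  have : Fact (1 ≤ p) := ⟨HolderConjugate.one_le p q⟩
  obtain ⟨w, hw, hwu⟩ := exists_lpnorm_le_one_dotR_eq (p := p) (q := q) u
  choose v hv_near hv_sign using fun i => exists_int_abs_sub_le_one_and_mul_nonneg (c * w i) (u i)
  set e : Fin d → ℝ := intPt v - c • w
  have hv : intPt v = c • w + e := (add_sub_cancel _ _).symm
  have he : lpnorm p e ≤ (d : ℝ) ^ (1 / p).toReal := lpnorm_le_card_rpow_of_abs_le_one hv_near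
  have heu : 0 ≤ dotR e u := Finset.sum_nonneg fun i _ => hv_sign i
  have heu' : dotR e u ≤ (d : ℝ) ^ (1 / p).toReal * lpnorm q u :=
    (dotR_le_lpnorm_mul_lpnorm e u).trans (by gcongr; exact lpnorm_nonneg q u)
  refine ⟨v, ?_⟩
  rw [hv, dotR_smul_add_left, hwu]
  refine ⟨?_, by linarith, by linarith⟩
  calc lpnorm p (c • w + e) ≤ |c| * lpnorm p w + lpnorm p e := by
        rw [← lpnorm_smul]; exact lpnorm_add_le _ _
    _ ≤ c * 1 + (d : ℝ) ^ (1 / p).toReal := by rw [abs_of_nonneg hc]; gcongr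
    _ = c + (d : ℝ) ^ (1 / p).toReal := by ring

lemma norm_one_sub_exp_two_pi_I_mul (t : ℝ) :
    ‖1 - Complex.exp (2 * π * Complex.I * t)‖ = 2 * |sin (π * t)| := by
  rw [norm_sub_rev, show 2 * π * Complex.I * t = Complex.I * (2 * π * t : ℝ) by push_cast; ring,
    Complex.norm_exp_I_mul_ofReal_sub_one, norm_mul, Real.norm_eq_abs, Real.norm_eq_abs,
    abs_two]
  ring_nf

lemma two_mul_sqrt_two_mul_le_sin_pi_mul {s : ℝ} (h0 : 0 ≤ s) (h1 : s ≤ 1 / 4) :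
    2 * √2 * s ≤ sin (π * s) := by
  have key : (1 - 4 * s) • sin 0 + (4 * s) • sin (π / 4)
      ≤ sin ((1 - 4 * s) • (0 : ℝ) + (4 * s) • (π / 4)) :=
    strictConcaveOn_sin_Icc.concaveOn.2 ⟨le_refl 0, pi_pos.le⟩
      ⟨by positivity, by linarith [pi_pos]⟩ (by linarith) (by linarith) (by ring)
  simp only [smul_eq_mul, mul_zero, sin_zero, zero_add, sin_pi_div_four] at key
  rw [show 4 * s * (π / 4) = π * s by ring] at key
  linarith

lemma four_mul_sqrt_two_mul_le_norm_one_sub_exp {s t : ℝ} (hs : 0 ≤ s) (hs' : s ≤ 1 / 4)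
    (hst : s ≤ t) (ht : t ≤ 1 / 2) :
    4 * √2 * s ≤ ‖1 - Complex.exp (2 * π * Complex.I * t)‖ := by
  have hsin : sin (π * s) ≤ sin (π * t) :=
    sin_le_sin_of_le_of_le_pi_div_two (by nlinarith [pi_pos]) (by nlinarith [pi_pos])
      (by nlinarith [pi_pos])
  rw [norm_one_sub_exp_two_pi_I_mul]
  linarith [two_mul_sqrt_two_mul_le_sin_pi_mul hs hs', le_abs_self (sin (π * t))]

theorem statement11_general (d : ℕ)
    (p q : ℝ≥0∞) (hpq : p⁻¹ + q⁻¹ = 1)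
    (u : Fin d → ℝ)
    (hu0 : 0 < lpnorm q u)
    (α : ℝ) (hα1 : lpnorm q u ≤ α)
    (hα2 : α ≤ 1 / (4 * (d : ℝ) ^ (1 / p).toReal)) :
    ∃ qv : Fin d → ℤ,
      lpnorm p (intPt qv) ≤ 1 / (2 * α) ∧
      1 / (4 * α) * lpnorm q u ≤ |dotR (intPt qv) u| ∧
      |dotR (intPt qv) u| ≤ 1 / 2 ∧
      Real.sqrt 2 / α * lpnorm q u
        ≤ ‖1 - Complex.exp (2 * Real.pi * Complex.I * (dotR (intPt qv) u : ℝ))‖ := by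
  have : p.HolderConjugate q := holderConjugate_iff.2 hpq
  set N := lpnorm q u
  set D : ℝ := (d : ℝ) ^ (1 / p).toReal
  have hα : 0 < α := hu0.trans_le hα1
  have hD : D ≤ 1 / (2 * α) - 1 / (4 * α) := by
    have : 0 < D := by linarith [one_div_pos.1 (hα.trans_le hα2)]
    rw [le_div_iff₀ (by positivity)] at hα2
    field_simp
    linarith
  obtain ⟨v, hv_norm, hv_low, hv_up⟩ :=
    exists_intPt_lpnorm_le_and_dotR_mem (p := p) (q := q) u (c := 1 / (2 * α) - D)
      (by linarith [show 0 < 1 / (4 * α) by positivity])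
  rw [sub_add_cancel] at hv_norm hv_up
  have hlow : 1 / (4 * α) * N ≤ dotR (intPt v) u :=
    le_trans (by gcongr; linarith) hv_low
  have hup : dotR (intPt v) u ≤ 1 / 2 :=
    hv_up.trans (by rw [div_mul_eq_mul_div, one_mul, div_le_iff₀ (by positivity)]; linarith)
  have hpos : 0 ≤ dotR (intPt v) u := (by positivity : (0 : ℝ) ≤ 1 / (4 * α) * N).trans hlow
  refine ⟨v, ?_⟩
  rw [abs_of_nonneg hpos]
  refine ⟨hv_norm, hlow, hup, ?_⟩
  calc √2 / α * N = 4 * √2 * (1 / (4 * α) * N) := by field_simp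
    _ ≤ _ := four_mul_sqrt_two_mul_le_norm_one_sub_exp (by positivity)
        (by rw [div_mul_eq_mul_div, one_mul, div_le_iff₀ (by positivity)]; linarith) hlow hup

/-- quantization lemma. -/
theorem statement11 (d : ℕ) (hd : 2 ≤ d)
    (p q : ℝ≥0∞) (hp : 1 ≤ p) (hpq : p⁻¹ + q⁻¹ = 1)
    (u : Fin d → ℝ) (hu : u ∈ cube d)
    (hu0 : 0 < lpnorm q u)
    (hub : lpnorm q u ≤ 1 / (4 * (d : ℝ) ^ (1 / p).toReal))
    (α : ℝ) (hα1 : lpnorm q u ≤ α)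
    (hα2 : α ≤ 1 / (4 * (d : ℝ) ^ (1 / p).toReal)) :
    ∃ qv : Fin d → ℤ,
      lpnorm p (intPt qv) ≤ 1 / (2 * α) ∧
      1 / (4 * α) * lpnorm q u ≤ |dotR (intPt qv) u| ∧
      |dotR (intPt qv) u| ≤ 1 / 2 ∧
      Real.sqrt 2 / α * lpnorm q u
        ≤ ‖1 - Complex.exp (2 * Real.pi * Complex.I * (dotR (intPt qv) u : ℝ))‖ :=
  statement11_general d p q hpq u hu0 α hα1 hα2

end NF
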